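/- For any square n×n real matrix A, det(I + A^T A) = Σ_P det(A_P)^2, where the sum is over all square submatrix patterns P of A including the empty pattern which contributes 1. In particular det(I + A^T A) ≥ 1. -/

import Mathlib

/-!
Expanding the determinant multilinearly in the rows of `1 + M` writes `det (1 + M)` as the sum of
all principal minors of `M`. For `M = Aᵀ * A` the principal minor on the columns `J` is the Gram
determinant of those columns, which the Cauchy–Binet formula expands as the sum of the squares of
the maximal minors `det (A_{I,J})`, `#I = #J`. The term `I = J = ∅` is the empty determinant `1`,
and all other terms are squares, whence `1 ≤ det (1 + Aᵀ * A)`.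
-/

open Matrix Finset

namespace Finset

theorem card_eq_and_forall_mem_iff_eq_image {α : Type*} [DecidableEq α] {m : ℕ}
    {r : Fin m → α} (hr : Function.Injective r) {J : Finset α} :
    (J.card = m ∧ ∀ i, r i ∈ J) ↔ J = univ.image r := by
  have hcard : (univ.image r).card = m := by
    rw [card_image_of_injective _ hr, card_univ, Fintype.card_fin]
  constructor
  · rintro ⟨hJ, hrJ⟩
    refine (eq_of_subset_of_card_le (fun x hx => ?_) (hJ.trans hcard.symm).le).symm
    obtain ⟨i, -, rfl⟩ := mem_image.1 hx
    exact hrJ i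
  · rintro rfl
    exact ⟨hcard, fun i => mem_image_of_mem r (mem_univ i)⟩

theorem sum_comp_orderEmbOfFin {α ι M : Type*} [LinearOrder α] [Fintype α] [Fintype ι]
    [DecidableEq ι] [AddCommMonoid M] (J : Finset α) {k : ℕ} (h : J.card = k)
    (f : (ι → α) → M) :
    ∑ s : ι → Fin k, f (J.orderEmbOfFin h ∘ s) =
      ∑ r ∈ Fintype.piFinset fun _ => J, f r := by
  have hinj : Function.Injective fun s : ι → Fin k => J.orderEmbOfFin h ∘ s :=
    (J.orderEmbOfFin h).injective.comp_left
  rw [← sum_image fun s _ t _ hst => hinj hst]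
  congr 1
  ext r
  simp only [mem_image, mem_univ, true_and, Fintype.mem_piFinset]
  rw [← Set.range_subset_iff.trans (forall_congr' fun _ => mem_coe), ← J.range_orderEmbOfFin h,
    Set.range_subset_range_iff_exists_comp]
  exact exists_congr fun s => eq_comm

end Finset

namespace Matrix

variable {R : Type*} [CommRing R]

theorem det_mul_eq_sum_prod_mul_det_submatrix {m α : Type*} [Fintype m] [DecidableEq m]
    [Fintype α] (B : Matrix m α R) (C : Matrix α m R) :
    (B * C).det = ∑ r : m → α, (∏ i, B i (r i)) * (C.submatrix r id).det := by
  have hrows : (B * C).det = (detRowAlternating : (m → R) [⋀^m]→ₗ[R] R).toMultilinearMap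
      fun i => ∑ k, B i k • C k := by
    congr 1
    ext i j
    simp [mul_apply]
  rw [hrows, MultilinearMap.map_sum]
  refine sum_congr rfl fun r _ => ?_
  rw [MultilinearMap.map_smul_univ]
  rfl

theorem det_mul_eq_sum_det_submatrix_mul_det_submatrix {α : Type*} [Fintype α] [LinearOrder α]
    {m : ℕ} (B : Matrix (Fin m) α R) (C : Matrix α (Fin m) R) :
    (B * C).det = ∑ J : Finset α, if h : J.card = m then
      (B.submatrix id (J.orderEmbOfFin h)).det * (C.submatrix (J.orderEmbOfFin h) id).det
    else 0 := by
  set T : (Fin m → α) → R := fun r => (∏ i, B i (r i)) * (C.submatrix r id).det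
  have hT : ∀ r, ¬ Function.Injective r → T r = 0 := by
    intro r hr
    obtain ⟨i, j, hij, hne⟩ := Function.not_injective_iff.1 hr
    change _ * _ = 0
    rw [det_zero_of_row_eq hne (funext fun k => by simp [hij]), mul_zero]
  -- By `det_mul` in the square case, `det B_J * det C_J` collects the `T r` with `r` valued in `J`.
  have hminor : ∀ J : Finset α, ∀ h : J.card = m,
      (B.submatrix id (J.orderEmbOfFin h)).det * (C.submatrix (J.orderEmbOfFin h) id).det =
        ∑ r ∈ Fintype.piFinset fun _ => J, T r := by
    intro J h
    rw [← det_mul, det_mul_eq_sum_prod_mul_det_submatrix]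
    exact sum_comp_orderEmbOfFin J h T
  calc (B * C).det = ∑ r, T r := det_mul_eq_sum_prod_mul_det_submatrix B C
    -- An injective `r` is valued in exactly one `J` of size `m`, its image.
    _ = ∑ r, ∑ J : Finset α, if J.card = m ∧ ∀ i, r i ∈ J then T r else 0 := by
      refine sum_congr rfl fun r _ => ?_
      by_cases hr : Function.Injective r
      · simp only [card_eq_and_forall_mem_iff_eq_image hr, sum_ite_eq', mem_univ, if_true]
      · simp [hT r hr]
    _ = _ := by
      rw [sum_comm]
      refine sum_congr rfl fun J _ => ?_
      split_ifs with h
      · simp only [hminor J h, h, true_and, ← Fintype.mem_piFinset, sum_ite_mem, univ_inter]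
      · simp [h]

theorem det_transpose_mul_self_eq_sum_sq {α : Type*} [Fintype α] [LinearOrder α] {m : ℕ}
    (M : Matrix α (Fin m) R) :
    (Mᵀ * M).det = ∑ I : Finset α, if h : I.card = m then
      (M.submatrix (I.orderEmbOfFin h) id).det ^ 2 else 0 := by
  rw [det_mul_eq_sum_det_submatrix_mul_det_submatrix]
  refine sum_congr rfl fun I _ => dite_congr rfl (fun h => ?_) fun _ => rfl
  rw [← transpose_submatrix, det_transpose, sq]

theorem det_one_add_eq_sum_det_submatrix {n : Type*} [Fintype n] [DecidableEq n]
    (M : Matrix n n R) :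
    (1 + M).det = ∑ s : Finset n, (M.submatrix ((↑) : s → n) (↑)).det := by
  have hrows : (1 + M).det = (detRowAlternating : (n → R) [⋀^n]→ₗ[R] R).toMultilinearMap
      (M.row + (1 : Matrix n n R).row) := by
    rw [add_comm]
    rfl
  rw [hrows, MultilinearMap.map_add_univ]
  exact sum_congr rfl fun s _ => det_piecewise_one_eq_submatrix_det M s

theorem det_submatrix_orderEmbOfFin {α : Type*} [LinearOrder α] (M : Matrix α α R)
    (s : Finset α) {k : ℕ} (h : s.card = k) :
    (M.submatrix (s.orderEmbOfFin h) (s.orderEmbOfFin h)).det =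
      (M.submatrix ((↑) : s → α) (↑)).det := by
  rw [← det_submatrix_equiv_self (s.orderIsoOfFin h).toEquiv]
  rfl

end Matrix

theorem det_one_add_transpose_mul_self {n : ℕ} (A : Matrix (Fin n) (Fin n) ℝ) :
    (1 + Aᵀ * A).det =
      (∑ I : Finset (Fin n), ∑ J : Finset (Fin n),
        (if h : I.card = J.card then
          ((A.submatrix (I.orderEmbOfFin h) (J.orderEmbOfFin rfl)).det) ^ 2
        else 0)) ∧
    1 ≤ (1 + Aᵀ * A).det := by
  have hexpand : (1 + Aᵀ * A).det = ∑ J : Finset (Fin n), ∑ I : Finset (Fin n),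
      if h : I.card = J.card then
        ((A.submatrix (I.orderEmbOfFin h) (J.orderEmbOfFin rfl)).det) ^ 2 else 0 := by
    rw [det_one_add_eq_sum_det_submatrix]
    refine sum_congr rfl fun J _ => ?_
    rw [← det_submatrix_orderEmbOfFin _ J rfl]
    exact det_transpose_mul_self_eq_sum_sq (A.submatrix id (J.orderEmbOfFin rfl))
  rw [sum_comm] at hexpand
  refine ⟨hexpand, ?_⟩
  rw [hexpand, ← Fintype.sum_prod_type']
  refine le_of_eq_of_le ?_ (single_le_sum (fun p _ => ?_) (mem_univ (∅, ∅)))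
  · simp
  · split_ifs <;> positivity
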